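/- Let φ ∈ E be an exp-polynomial Whittaker function for the pair (g, g_{−1}) of the loop Witt algebra. For any f_1(t), ..., f_s(t) ∈ Ann(φ), the vector Π_{i=1}^s (d_0 ⊗ f_i(t)) v_φ is a Whittaker vector of W(g_{−1}, φ): (d_{−1} ⊗ t^k) fixes it according to φ(t^k) for all k ∈ Z. -/

import Mathlib

def IsExpPoly (φ : ℤ → ℂ) : Prop :=
  ∃ (s : Finset (ℕ × ℂ)) (c : ℕ × ℂ → ℂ),
    (∀ p ∈ s, p.2 ≠ 0) ∧
    ∀ n : ℤ, φ n = ∑ p ∈ s, c p * (n : ℂ) ^ p.1 * p.2 ^ n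

/-!
Since `[d_{-1} ⊗ t^k, d_0 ⊗ t^m] = d_{-1} ⊗ t^{k+m}`, applying `d_{-1} ⊗ t^k` to
`(d_0 ⊗ f) u` for a Whittaker vector `u` gives `(f.φ)(t^k) u + φ(t^k) (d_0 ⊗ f) u`.
The first term vanishes when `f ∈ Ann(φ)`, so `d_0 ⊗ f` preserves Whittaker vectors,
and the theorem follows by induction on the number of factors.
-/

namespace LoopWitt

variable {R g V : Type*} [CommRing R] [LieRing g] [LieAlgebra R g]
  [AddCommGroup V] [Module R V] [LieRingModule g V] [LieModule R g V]

def IsWhittakerVector (E : ℤ → g) (φ : ℤ → R) (u : V) : Prop :=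
  ∀ k, ⁅E k, u⁆ = φ k • u

/-- The action of `H ⊗ p` for a Laurent polynomial `p = ∑ aₘ tᵐ`. -/
def loopAct (H : ℤ → g) (p : ℤ →₀ R) (u : V) : V :=
  p.sum fun m a => a • ⁅H m, u⁆

/-- `p ∈ Ann(φ)`, i.e. `(p.φ)(tⁿ) = 0` for every `n`. -/
def Annihilates (p : ℤ →₀ R) (φ : ℤ → R) : Prop :=
  ∀ n, (p.sum fun m a => a * φ (n + m)) = 0

variable {E H : ℤ → g} {φ : ℤ → R} {u : V}

theorem IsWhittakerVector.lie_lie (hE : IsWhittakerVector E φ u)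
    (hEH : ∀ k m, ⁅E k, H m⁆ = E (k + m)) (k m : ℤ) :
    ⁅E k, ⁅H m, u⁆⁆ = φ (k + m) • u + φ k • ⁅H m, u⁆ := by
  rw [leibniz_lie, hEH, hE, hE, lie_smul]

theorem IsWhittakerVector.loopAct (hE : IsWhittakerVector E φ u)
    (hEH : ∀ k m, ⁅E k, H m⁆ = E (k + m)) {p : ℤ →₀ R} (hp : Annihilates p φ) :
    IsWhittakerVector E φ (loopAct H p u) := by
  intro k
  have hterm : ∀ m, ⁅E k, p m • ⁅H m, u⁆⁆
      = (p m * φ (k + m)) • u + φ k • p m • ⁅H m, u⁆ := fun m => by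
    rw [lie_smul, hE.lie_lie hEH, smul_add, smul_smul, smul_comm (p m) (φ k)]
  have hsum : ∑ m ∈ p.support, p m * φ (k + m) = 0 := hp k
  simp only [LoopWitt.loopAct, Finsupp.sum, lie_sum, hterm, Finset.sum_add_distrib,
    ← Finset.sum_smul, hsum, zero_smul, zero_add, Finset.smul_sum]

theorem IsWhittakerVector.foldr_loopAct (hE : IsWhittakerVector E φ u)
    (hEH : ∀ k m, ⁅E k, H m⁆ = E (k + m)) {L : List (ℤ →₀ R)}
    (hL : ∀ p ∈ L, Annihilates p φ) :
    IsWhittakerVector E φ (L.foldr (LoopWitt.loopAct H) u) := by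
  induction L with
  | nil => exact hE
  | cons p L ih =>
    exact (ih fun q hq => hL q (List.mem_cons_of_mem p hq)).loopAct hEH
      (hL p List.mem_cons_self)

end LoopWitt

open LoopWitt in
theorem stmt16_general     (g : Type*) [LieRing g] [LieAlgebra ℂ g]
    (D : ℤ → ℤ → g)
    (hbra : ∀ n m k l : ℤ, -1 ≤ n → -1 ≤ m →
      ⁅D n k, D m l⁆ = ((m - n : ℤ) : ℂ) • D (n + m) (k + l))
    (φ : ℤ → ℂ)
    (V : Type) [AddCommGroup V] [Module ℂ V] [LieRingModule g V] [LieModule ℂ g V]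
    (v : V)
    (hwhit : ∀ k : ℤ, ⁅D (-1) k, v⁆ = φ k • v)
    (s : ℕ) (f : Fin s → (ℤ →₀ ℂ))
    (hann : ∀ (i : Fin s) (n : ℤ), ((f i).sum fun m a => a * φ (n + m)) = 0) :
    ∀ k : ℤ,
      ⁅D (-1) k, (List.ofFn f).foldr
          (fun fi u => fi.sum fun m a => a • ⁅D 0 m, u⁆) v⁆ =
        φ k • (List.ofFn f).foldr
          (fun fi u => fi.sum fun m a => a • ⁅D 0 m, u⁆) v := by
  have hEH : ∀ k m, ⁅D (-1) k, D 0 m⁆ = D (-1) (k + m) := fun k m => by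
    simpa using hbra (-1) 0 k m le_rfl (by norm_num)
  have hL : ∀ p ∈ List.ofFn f, Annihilates p φ := by
    intro p hp
    obtain ⟨i, rfl⟩ := List.mem_ofFn.mp hp
    exact hann i
  exact IsWhittakerVector.foldr_loopAct (E := D (-1)) hwhit hEH hL

/-- Let `φ ∈ E` be an exp-polynomial Whittaker function for the pair
`(g, g_{-1})` of the loop Witt algebra.  For any `f_1, …, f_s ∈ Ann(φ)` (encoded as
`f i : ℤ →₀ ℂ`), the vector `Π_{i=1}^s (d_0 ⊗ f_i) v_φ` is a Whittaker vector of
`W(g_{-1}, φ)`: `(d_{-1} ⊗ t^k)` acts on it by `φ(t^k)` for all `k ∈ ℤ`. -/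
theorem stmt16     (g : Type*) [LieRing g] [LieAlgebra ℂ g]
    (D : ℤ → ℤ → g)
    (hli : LinearIndependent ℂ (fun p : {q : ℤ × ℤ // -1 ≤ q.1} => D p.1.1 p.1.2))
    (hspan : Submodule.span ℂ
      (Set.range fun p : {q : ℤ × ℤ // -1 ≤ q.1} => D p.1.1 p.1.2) = ⊤)
    (hbra : ∀ n m k l : ℤ, -1 ≤ n → -1 ≤ m →
      ⁅D n k, D m l⁆ = ((m - n : ℤ) : ℂ) • D (n + m) (k + l))
    (φ : ℤ → ℂ)
    (V : Type) [AddCommGroup V] [Module ℂ V] [LieRingModule g V] [LieModule ℂ g V]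
    (v : V) (hv : v ≠ 0)
    (hwhit : ∀ k : ℤ, ⁅D (-1) k, v⁆ = φ k • v)
    (hgen : ∀ W : LieSubmodule ℂ g V, v ∈ W → W = ⊤)
    (huniv : ∀ (V' : Type) [AddCommGroup V'] [Module ℂ V'] [LieRingModule g V']
      [LieModule ℂ g V'] (v' : V'),
      (∀ k : ℤ, ⁅D (-1) k, v'⁆ = φ k • v') →
      ∃ f : V →ₗ[ℂ] V', f v = v' ∧ ∀ (x : g) (u : V), f ⁅x, u⁆ = ⁅x, f u⁆)
    (hE : IsExpPoly φ)
    (s : ℕ) (f : Fin s → (ℤ →₀ ℂ))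
    (hann : ∀ (i : Fin s) (n : ℤ), ((f i).sum fun m a => a * φ (n + m)) = 0) :
    ∀ k : ℤ,
      ⁅D (-1) k, (List.ofFn f).foldr
          (fun fi u => fi.sum fun m a => a • ⁅D 0 m, u⁆) v⁆ =
        φ k • (List.ofFn f).foldr
          (fun fi u => fi.sum fun m a => a • ⁅D 0 m, u⁆) v :=
  stmt16_general g D hbra φ V v hwhit s f hann
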